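/- For every ℓ ≥ 1 and ω ≥ 2, E(ℓ,ω) ≥ log_2(ℓ)/log_2(ω/(ω−1)) + log_2(e)/(ℓ log_2(ω/(ω−1))). -/

import Mathlib

/-!
Inclusion–exclusion identifies `γ_{ω,m}` with the proportion of non-surjective maps
`Fin m → Fin ω`. These contain the maps missing a fixed value, so `γ_{ω,m} ≥ q ^ m` with
`q = (ω - 1) / ω`, while the union bound `γ_{ω,m} ≤ ω q ^ m` makes the series summable. Hence
the series is at least its value at `γ_{ω,m} = q ^ m`, the expected maximum of `ℓ` geometric
variables. As `x ↦ 1 - (1 - q ^ x) ^ ℓ` is antitone, that series dominates its integral over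
`[0, ∞)`, which the substitution `u = 1 - q ^ x` turns into
`(∫₀¹ (1 - u ^ ℓ) / (1 - u) du) / log (1 / q) = H_ℓ / log (1 / q)`. Finally
`H_ℓ ≥ log ℓ + 1 / ℓ`.
-/

open Finset

/-- `γ_{ω,m} = (1/ω^m) ∑_{i=1}^{ω} C(ω,i) (-1)^{i+1} (ω-i)^m`. -/
noncomputable def gam (w m : ℕ) : ℝ :=
  (1 / (w : ℝ) ^ m) * ∑ i ∈ Icc 1 w, (w.choose i : ℝ) * (-1) ^ (i + 1) * ((w - i : ℕ) : ℝ) ^ m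

open Real Filter Topology

section NonSurjections

variable {w m : ℕ}

def missing (m : ℕ) (i : Fin w) : Finset (Fin m → Fin w) :=
  Fintype.piFinset fun _ => {i}ᶜ

def nonSurjections (w m : ℕ) : Finset (Fin m → Fin w) :=
  univ.biUnion (missing m)

lemma inf_missing (t : Finset (Fin w)) :
    t.inf (missing m) = Fintype.piFinset fun _ => tᶜ := by
  ext f
  simp only [missing, mem_inf, Fintype.mem_piFinset, mem_compl, mem_singleton]
  grind

lemma card_inf_missing (t : Finset (Fin w)) : #(t.inf (missing m)) = (w - #t) ^ m := by
  simp [inf_missing, card_compl]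

lemma card_missing (i : Fin w) : #(missing m i) = (w - 1) ^ m := by
  simpa using card_inf_missing (m := m) {i}

lemma card_nonSurjections :
    (#(nonSurjections w m) : ℝ) =
      ∑ i ∈ Icc 1 w, (w.choose i : ℝ) * (-1) ^ (i + 1) * ((w - i : ℕ) : ℝ) ^ m := by
  have hie := inclusion_exclusion_card_inf_compl (univ : Finset (Fin w)) (missing m)
  rw [← Finset.compl_sup, sup_eq_biUnion, ← nonSurjections, card_compl,
    Nat.cast_sub (card_le_univ _)] at hie
  simp only [card_inf_missing, sum_powerset_apply_card (fun j => (-1 : ℤ) ^ j * ((w - j) ^ m : ℕ)),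
    card_univ, Fintype.card_fun, Fintype.card_fin, nsmul_eq_mul, sum_range_succ'] at hie
  have hieR := congrArg (Int.cast : ℤ → ℝ) hie
  push_cast at hieR
  rw [← Ico_add_one_right_eq_Icc, sum_Ico_eq_sum_range, Nat.add_sub_cancel]
  simp only [add_comm 1, pow_succ, mul_neg, neg_mul, mul_one, one_mul, Nat.choose_zero_right,
    Nat.cast_one, Nat.sub_zero, sum_neg_distrib, mul_assoc] at hieR ⊢
  linear_combination -hieR

lemma pow_sub_one_le_card_nonSurjections (hw : 1 ≤ w) : (w - 1) ^ m ≤ #(nonSurjections w m) :=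
  card_missing (m := m) (⟨0, hw⟩ : Fin w) ▸ card_le_card (subset_biUnion_of_mem _ (mem_univ _))

lemma card_nonSurjections_le_mul : #(nonSurjections w m) ≤ w * (w - 1) ^ m :=
  card_biUnion_le.trans (by simp [card_missing])

end NonSurjections

section Gam

variable {w m : ℕ}

lemma gam_eq_card_nonSurjections : gam w m = #(nonSurjections w m) / (w : ℝ) ^ m := by
  rw [gam, card_nonSurjections, one_div_mul_eq_div]

lemma gam_nonneg : 0 ≤ gam w m := by
  rw [gam_eq_card_nonSurjections]
  positivity

lemma gam_le_one : gam w m ≤ 1 := by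
  rw [gam_eq_card_nonSurjections]
  refine div_le_one_of_le₀ ?_ (by positivity)
  exact_mod_cast (card_le_univ _).trans_eq (by simp)

lemma pow_le_gam (hw : 1 ≤ w) : (((w : ℝ) - 1) / w) ^ m ≤ gam w m := by
  rw [gam_eq_card_nonSurjections, div_pow, ← Nat.cast_pred hw]
  gcongr
  exact_mod_cast pow_sub_one_le_card_nonSurjections hw

lemma gam_le_mul_pow (hw : 1 ≤ w) : gam w m ≤ w * (((w : ℝ) - 1) / w) ^ m := by
  rw [gam_eq_card_nonSurjections, div_pow, ← mul_div_assoc, ← Nat.cast_pred hw]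
  gcongr
  exact_mod_cast card_nonSurjections_le_mul

end Gam

lemma one_sub_one_sub_pow_nonneg {a : ℝ} (ha₀ : 0 ≤ a) (ha₁ : a ≤ 1) (ℓ : ℕ) :
    0 ≤ 1 - (1 - a) ^ ℓ :=
  sub_nonneg.2 (pow_le_one₀ (by linarith) (by linarith))

lemma one_sub_one_sub_pow_le_mul {a : ℝ} (ha : a ≤ 2) (ℓ : ℕ) : 1 - (1 - a) ^ ℓ ≤ ℓ * a := by
  have := one_add_mul_le_pow (a := -a) (by linarith) ℓ
  rw [← sub_eq_add_neg] at this
  linarith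

lemma one_sub_one_sub_pow_le_one_sub_one_sub_pow {a b : ℝ} (hab : a ≤ b) (hb : b ≤ 1) (ℓ : ℕ) :
    1 - (1 - a) ^ ℓ ≤ 1 - (1 - b) ^ ℓ :=
  sub_le_sub_left (pow_le_pow_left₀ (by linarith) (by linarith) ℓ) 1

lemma summable_one_sub_one_sub_pow {a : ℕ → ℝ} (ha₀ : ∀ m, 0 ≤ a m) (ha₁ : ∀ m, a m ≤ 1)
    (ha : Summable a) (ℓ : ℕ) : Summable fun m => 1 - (1 - a m) ^ ℓ :=
  (ha.mul_left (ℓ : ℝ)).of_nonneg_of_le (fun m => one_sub_one_sub_pow_nonneg (ha₀ m) (ha₁ m) ℓ)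
    fun m => one_sub_one_sub_pow_le_mul (by linarith [ha₁ m]) ℓ

lemma log_add_inv_le_harmonic {n : ℕ} (hn : 1 ≤ n) : log n + (n : ℝ)⁻¹ ≤ harmonic n := by
  obtain ⟨k, rfl⟩ := Nat.exists_eq_add_of_le' hn
  have := log_add_one_le_harmonic k
  rw [harmonic_succ]
  push_cast at this ⊢
  linarith

section GeometricMaximum

variable {q : ℝ}

lemma summable_one_sub_one_sub_geometric (hq₀ : 0 < q) (hq₁ : q < 1) (ℓ : ℕ) :
    Summable fun m : ℕ => 1 - (1 - q ^ m) ^ ℓ :=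
  summable_one_sub_one_sub_pow (fun m => by positivity) (fun m => pow_le_one₀ hq₀.le hq₁.le)
    (summable_geometric_of_lt_one hq₀.le hq₁) ℓ

/-- With `u = 1 - q ^ x` one has `u' = -log q * (1 - u)`, and
`(1 - u) * ∑_{k<ℓ} u ^ k = 1 - u ^ ℓ`. -/
lemma hasDerivAt_sum_one_sub_rpow_pow (hq : 0 < q) (ℓ : ℕ) (x : ℝ) :
    HasDerivAt (fun x : ℝ => ∑ k ∈ range ℓ, (1 - q ^ x) ^ (k + 1) / (k + 1))
      (-log q * (1 - (1 - q ^ x) ^ ℓ)) x := by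
  have hu : HasDerivAt (fun x : ℝ => 1 - q ^ x) (-(q ^ x * log q)) x :=
    ((hasStrictDerivAt_const_rpow hq x).hasDerivAt).const_sub 1
  refine (HasDerivAt.fun_sum fun k _ => (hu.pow (k + 1)).div_const ((k : ℝ) + 1)).congr_deriv ?_
  rw [← mul_neg_geom_sum, mul_sum, mul_sum]
  refine sum_congr rfl fun k _ => ?_
  field_simp
  push_cast
  ring

lemma integral_one_sub_one_sub_rpow_pow (hq₀ : 0 < q) (hq₁ : q ≠ 1) (ℓ : ℕ) (N : ℝ) :
    ∫ x in (0 : ℝ)..N, (1 - (1 - q ^ x) ^ ℓ) =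
      (∑ k ∈ range ℓ, (1 - q ^ N) ^ (k + 1) / (k + 1)) / -log q := by
  have hlog : -log q ≠ 0 := neg_ne_zero.2 (log_ne_zero_of_pos_of_ne_one hq₀ hq₁)
  rw [eq_div_iff hlog, mul_comm, ← intervalIntegral.integral_const_mul,
    intervalIntegral.integral_eq_sub_of_hasDerivAt
      (fun x _ => hasDerivAt_sum_one_sub_rpow_pow hq₀ ℓ x)]
  · simp
  · exact (continuous_const.mul (continuous_const.sub
      ((continuous_const.sub (continuous_const_rpow hq₀.ne')).pow ℓ))).intervalIntegrable _ _

lemma harmonic_div_neg_log_le_tsum (hq₀ : 0 < q) (hq₁ : q < 1) (ℓ : ℕ) :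
    harmonic ℓ / -log q ≤ ∑' m : ℕ, (1 - (1 - q ^ m) ^ ℓ) := by
  set f : ℝ → ℝ := fun x => 1 - (1 - q ^ x) ^ ℓ
  have hf : ∀ m : ℕ, f m = 1 - (1 - q ^ m) ^ ℓ := fun m => by simp [f]
  have hanti : AntitoneOn f (Set.Ici 0) := fun x hx y _ hxy =>
    one_sub_one_sub_pow_le_one_sub_one_sub_pow (rpow_le_rpow_of_exponent_ge hq₀ hq₁.le hxy)
      (rpow_le_one hq₀.le hq₁.le hx) ℓ
  have hbound : ∀ N : ℕ, ∫ x in (0 : ℝ)..N, f x ≤ ∑' m : ℕ, (1 - (1 - q ^ m) ^ ℓ) := by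
    intro N
    calc ∫ x in (0 : ℝ)..N, f x ≤ ∑ i ∈ range N, f i := by
          simpa using (hanti.mono Set.Icc_subset_Ici_self).integral_le_sum (x₀ := 0) (a := N)
      _ ≤ _ := by
          simp only [hf]
          exact (summable_one_sub_one_sub_geometric hq₀ hq₁ ℓ).sum_le_tsum _ fun m _ =>
            one_sub_one_sub_pow_nonneg (by positivity) (pow_le_one₀ hq₀.le hq₁.le) ℓ
  have hlim : Tendsto (fun N : ℕ => ∫ x in (0 : ℝ)..N, f x) atTop (𝓝 (harmonic ℓ / -log q)) := by
    simp only [f, integral_one_sub_one_sub_rpow_pow hq₀ hq₁.ne, rpow_natCast]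
    have hP : Continuous fun u : ℝ => ∑ k ∈ range ℓ, u ^ (k + 1) / (k + 1) := by fun_prop
    have := (hP.tendsto _).comp ((tendsto_pow_atTop_nhds_zero_of_lt_one hq₀.le hq₁).const_sub 1)
    convert this.div_const (-log q) using 2
    · simp
    · simp [harmonic]
  exact le_of_tendsto' hlim hbound

end GeometricMaximum

/-- `E(ℓ,ω) = ∑_{m=0}^∞ (1 - (1 - γ_{ω,m})^ℓ)` satisfies
`E(ℓ,ω) ≥ log₂(ℓ)/log₂(ω/(ω-1)) + log₂(e)/(ℓ log₂(ω/(ω-1)))`. -/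
theorem stmt_6 (ℓ w : ℕ) (hℓ : 1 ≤ ℓ) (hw : 2 ≤ w) :
    Real.logb 2 ℓ / Real.logb 2 ((w : ℝ) / ((w : ℝ) - 1))
        + Real.logb 2 (Real.exp 1) / ((ℓ : ℝ) * Real.logb 2 ((w : ℝ) / ((w : ℝ) - 1)))
      ≤ ∑' m : ℕ, (1 - (1 - gam w m) ^ ℓ) := by
  set q : ℝ := ((w : ℝ) - 1) / w with hq
  have hwR : (2 : ℝ) ≤ w := by exact_mod_cast hw
  have hq₀ : 0 < q := div_pos (by linarith) (by linarith)
  have hq₁ : q < 1 := (div_lt_one (by linarith)).2 (by linarith)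
  have hlog : log ((w : ℝ) / ((w : ℝ) - 1)) = -log q := by rw [hq, ← log_inv, inv_div]
  have hgam : Summable fun m => 1 - (1 - gam w m) ^ ℓ :=
    summable_one_sub_one_sub_pow (fun _ => gam_nonneg) (fun _ => gam_le_one)
      (((summable_geometric_of_lt_one hq₀.le hq₁).mul_left (w : ℝ)).of_nonneg_of_le
        (fun _ => gam_nonneg) fun _ => gam_le_mul_pow (by omega)) ℓ
  calc _ = (log ℓ + (ℓ : ℝ)⁻¹) / -log q := by
        have : (ℓ : ℝ) ≠ 0 := by positivity
        simp only [logb, log_exp, hlog]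
        field_simp
        ring
    _ ≤ harmonic ℓ / -log q := by
        gcongr
        · linarith [log_neg hq₀ hq₁]
        · exact log_add_inv_le_harmonic hℓ
    _ ≤ ∑' m : ℕ, (1 - (1 - q ^ m) ^ ℓ) := harmonic_div_neg_log_le_tsum hq₀ hq₁ ℓ
    _ ≤ ∑' m : ℕ, (1 - (1 - gam w m) ^ ℓ) :=
        (summable_one_sub_one_sub_geometric hq₀ hq₁ ℓ).tsum_le_tsum
          (fun m => one_sub_one_sub_pow_le_one_sub_one_sub_pow (pow_le_gam (by omega)) gam_le_one ℓ)
          hgam
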